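/- arXiv:math/9201220 — 4 statements merged into one kernel-verified Lean document; each statement's English description precedes it below -/
import Mathlib

section
/- Let h be a function analytic on the open disc D_R = {z ∈ ℂ : |z| < R} with h(0) = 0. Then for any 0 < r < R, |h'(0)| ≤ (2/r) · sup_{|z| = r} Re(h(z)). -/
open Metric Set

/-- Carathéodory's inequality: if `h` is analytic on the disc of radius `R`,
`h 0 = 0`, and `0 < r < R`, then `|h'(0)| ≤ (2/r) · sup_{|z|=r} Re (h z)`. -/
theorem caratheodory_inequality (h : ℂ → ℂ) (R r : ℝ)
    (hR : DifferentiableOn ℂ h (ball (0 : ℂ) R))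
    (h0 : h 0 = 0) (hr0 : 0 < r) (hrR : r < R) :
    ‖deriv h 0‖ ≤ (2 / r) * sSup ((fun z => (h z).re) '' sphere (0 : ℂ) r) := by
  set A := sSup ((fun z => (h z).re) '' sphere (0 : ℂ) r) with hAdef
  have hsub : closedBall (0:ℂ) r ⊆ ball 0 R := closedBall_subset_ball hrR
  have hd : DifferentiableOn ℂ h (ball (0:ℂ) r) := hR.mono (ball_subset_ball hrR.le)
  have hcont : ContinuousOn h (closedBall (0:ℂ) r) := (hR.mono hsub).continuousOn
  have hcomp : IsCompact ((fun z => (h z).re) '' sphere (0:ℂ) r) :=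
    (isCompact_sphere 0 r).image_of_continuousOn
      (Complex.continuous_re.comp_continuousOn (hcont.mono sphere_subset_closedBall))
  have hbdd : BddAbove ((fun z => (h z).re) '' sphere (0:ℂ) r) := hcomp.bddAbove
  have hlesA : ∀ z ∈ sphere (0:ℂ) r, (h z).re ≤ A := fun z hz => le_csSup hbdd ⟨z, hz, rfl⟩
  have h0mem : (0:ℂ) ∈ ball (0:ℂ) r := mem_ball_self hr0
  have hdiff0 : DifferentiableAt ℂ h 0 := hd.differentiableAt (isOpen_ball.mem_nhds h0mem)
  -- maximum principle: Re h ≤ A on the closed ball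
  have hmax : ∀ z ∈ closedBall (0:ℂ) r, (h z).re ≤ A := by
    intro z hz
    have hdc : DiffContOnCl ℂ (fun w => Complex.exp (h w)) (ball (0:ℂ) r) := by
      refine DifferentiableOn.diffContOnCl ?_
      rw [closure_ball (0:ℂ) hr0.ne']
      exact (hR.mono hsub).cexp
    have hfr : ∀ w ∈ frontier (ball (0:ℂ) r), ‖Complex.exp (h w)‖ ≤ Real.exp A := by
      intro w hw
      rw [frontier_ball (0:ℂ) hr0.ne'] at hw
      rw [Complex.norm_exp]
      exact Real.exp_le_exp.mpr (hlesA w hw)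
    have := Complex.norm_le_of_forall_mem_frontier_norm_le isBounded_ball hdc hfr
      (z := z) (by rwa [closure_ball (0:ℂ) hr0.ne'])
    rw [Complex.norm_exp] at this
    exact Real.exp_le_exp.mp this
  have hA0 : 0 ≤ A := by
    have := hmax 0 (mem_closedBall_self hr0.le)
    rwa [h0, Complex.zero_re] at this
  by_cases hcase : ∃ z₀ ∈ ball (0:ℂ) r, A ≤ (h z₀).re
  · -- max attained at interior point: h is constant, so deriv h 0 = 0
    obtain ⟨z₀, hz₀, hz₀A⟩ := hcase
    have hmaxon : IsMaxOn (norm ∘ fun w => Complex.exp (h w)) (ball (0:ℂ) r) z₀ := by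
      intro w hw
      simp only [Function.comp_apply, Complex.norm_exp, Set.mem_setOf_eq]
      exact Real.exp_le_exp.mpr ((hmax w (ball_subset_closedBall hw)).trans hz₀A)
    have heq : EqOn (fun w => Complex.exp (h w))
        (Function.const ℂ (Complex.exp (h z₀))) (ball (0:ℂ) r) :=
      Complex.eqOn_of_isPreconnected_of_isMaxOn_norm (convex_ball _ _).isPreconnected
        isOpen_ball hd.cexp hz₀ hmaxon
    have heqnhds : (fun w => Complex.exp (h w)) =ᶠ[nhds (0:ℂ)]
        fun _ => Complex.exp (h z₀) :=
      Filter.eventuallyEq_of_mem (isOpen_ball.mem_nhds h0mem) heq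
    have hderiv0 : deriv (fun w => Complex.exp (h w)) 0 = 0 := by
      rw [heqnhds.deriv_eq, deriv_const]
    have hchain : deriv (fun w => Complex.exp (h w)) 0 = Complex.exp (h 0) * deriv h 0 :=
      ((Complex.hasDerivAt_exp (h 0)).comp 0 hdiff0.hasDerivAt).deriv
    have hd0 : deriv h 0 = 0 := by
      have := hchain.symm.trans hderiv0
      rcases mul_eq_zero.mp this with h1 | h2
      · exact absurd h1 (Complex.exp_ne_zero _)
      · exact h2
    rw [hd0, norm_zero]
    positivity
  · push_neg at hcase
    have hApos : 0 < A := by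
      have := hcase 0 h0mem
      rwa [h0, Complex.zero_re] at this
    set g : ℂ → ℂ := fun z => h z / ((2*A : ℂ) - h z) with hg
    have hden : ∀ z ∈ ball (0:ℂ) r, ((2*A : ℂ)) - h z ≠ 0 := by
      intro z hz hzero
      have hre : ((2*A:ℂ) - h z).re = 0 := by rw [hzero]; simp
      have : (h z).re < A := hcase z hz
      simp only [Complex.sub_re, Complex.mul_re, Complex.ofReal_re, Complex.ofReal_im] at hre
      norm_num at hre
      linarith
    have hgd : DifferentiableOn ℂ g (ball (0:ℂ) r) :=
      hd.div ((differentiableOn_const _).sub hd) hden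
    have hg0 : g 0 = 0 := by simp [hg, h0]
    have hmapsto : MapsTo g (ball (0:ℂ) r) (ball (g 0) 1) := by
      rw [hg0]
      intro z hz
      rw [mem_ball_zero_iff, hg]
      have hdz := hden z hz
      have hlt : (h z).re < A := hcase z hz
      have hsq : ‖h z‖^2 < ‖(2*A:ℂ) - h z‖^2 := by
        rw [Complex.sq_norm, Complex.sq_norm,
          Complex.normSq_apply, Complex.normSq_apply]
        simp only [Complex.sub_re, Complex.sub_im, Complex.mul_re, Complex.mul_im,
          Complex.ofReal_re, Complex.ofReal_im, Complex.re_ofNat, Complex.im_ofNat]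
        nlinarith [hlt, hApos]
      have hnormlt : ‖h z‖ < ‖(2*A:ℂ) - h z‖ :=
        lt_of_pow_lt_pow_left₀ 2 (norm_nonneg _) hsq
      simp only [norm_div]
      rw [div_lt_one (lt_of_le_of_lt (norm_nonneg _) hnormlt)]
      exact hnormlt
    have hschwarz := Complex.norm_deriv_le_div_of_mapsTo_ball hgd (hmapsto.mono_right ball_subset_closedBall) hr0
    have hden0 : ((2*A:ℂ)) - h 0 ≠ 0 := hden 0 h0mem
    have hderg : HasDerivAt g
        ((deriv h 0 * ((2*A:ℂ) - h 0) - h 0 * (0 - deriv h 0)) / ((2*A:ℂ) - h 0)^2) 0 :=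
      hdiff0.hasDerivAt.div ((hasDerivAt_const 0 ((2*A:ℂ))).sub hdiff0.hasDerivAt) hden0
    have h2A : (2*A:ℂ) ≠ 0 := by
      simp only [Ne, mul_eq_zero, Complex.ofReal_eq_zero]
      push_neg
      constructor <;> norm_num
      linarith
    have hdg0 : deriv g 0 = deriv h 0 / (2*A : ℂ) := by
      rw [hderg.deriv, h0]
      have hAc : (A:ℂ) ≠ 0 := Complex.ofReal_ne_zero.mpr hApos.ne'
      field_simp
      ring
    have hnormg : ‖deriv g 0‖ = ‖deriv h 0‖ / (2*A) := by
      rw [hdg0, norm_div]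
      congr 1
      rw [show ((2*A:ℂ)) = ((2*A : ℝ) : ℂ) by push_cast; ring, Complex.norm_real,
        Real.norm_eq_abs, abs_of_pos (by linarith)]
    rw [hnormg] at hschwarz
    rw [div_le_div_iff₀ (by linarith) hr0] at hschwarz
    calc ‖deriv h 0‖ ≤ 2*A/r := by rw [le_div_iff₀ hr0]; linarith
      _ = 2 / r * A := by ring
end

section
/- Let X be a reflexive Banach space with the approximation property, α, β > 0, n ≥ 1, and suppose that for every subspace E ⊆ X with dim E ≤ n there is a bounded operator u : X → X with u restricted to E equal to the identity, ‖u‖ ≤ α, and nuclear norm N(u) ≤ β·n. Then for all nuclear operators T₁, T₂ on X such that T₁ + T₂ has rank ≤ n, |tr(T₁ + T₂)| ≤ α·N(T₁) + β·n·‖T₂‖. -/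
variable {X : Type*} [NormedAddCommGroup X] [NormedSpace ℝ X]

/-- `u` is a nuclear operator: it admits a representation `u y = Σ fₙ(y) xₙ` with
`Σ ‖fₙ‖ ‖xₙ‖ < ∞`. -/
def IsNuclear (u : X →L[ℝ] X) : Prop :=
  ∃ (f : ℕ → (X →L[ℝ] ℝ)) (x : ℕ → X),
    Summable (fun n => ‖f n‖ * ‖x n‖) ∧ ∀ y, HasSum (fun n => f n y • x n) (u y)

/-- The nuclear norm `N(u) = inf { Σ ‖fₙ‖ ‖xₙ‖ }` over all nuclear representations. -/
noncomputable def NuclearNorm (u : X →L[ℝ] X) : ℝ :=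
  sInf { c | ∃ (f : ℕ → (X →L[ℝ] ℝ)) (x : ℕ → X),
    Summable (fun n => ‖f n‖ * ‖x n‖) ∧ (∑' n, ‖f n‖ * ‖x n‖) = c ∧
    ∀ y, HasSum (fun n => f n y • x n) (u y) }

/-- `t` is the trace of `u` computed from some nuclear representation of `u`.  (For a
space with the approximation property this value is independent of the
representation.) -/
def IsTraceOf (u : X →L[ℝ] X) (t : ℝ) : Prop :=
  ∃ (f : ℕ → (X →L[ℝ] ℝ)) (x : ℕ → X),
    Summable (fun n => ‖f n‖ * ‖x n‖) ∧ (∀ y, HasSum (fun n => f n y • x n) (u y)) ∧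
    HasSum (fun n => f n (x n)) t

/-- The approximation property. -/
def HasAP (X : Type*) [NormedAddCommGroup X] [NormedSpace ℝ X] : Prop :=
  ∀ (K : Set X), IsCompact K → ∀ ε > 0, ∃ T : X →L[ℝ] X,
    FiniteDimensional ℝ (LinearMap.range (T : X →ₗ[ℝ] X)) ∧ ∀ x ∈ K, ‖T x - x‖ ≤ ε


lemma aux_summable_comp {ι : Type*} (f : ι → X →L[ℝ] ℝ) (x : ι → X)
    (hf : Summable fun i => ‖f i‖ * ‖x i‖) (v : X →L[ℝ] X) :
    Summable fun i => f i (v (x i)) := by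
  apply Summable.of_norm_bounded (g := fun i => ‖v‖ * (‖f i‖ * ‖x i‖)) (hf.mul_left _)
  intro i
  calc ‖f i (v (x i))‖ ≤ ‖f i‖ * ‖v (x i)‖ := (f i).le_opNorm _
    _ ≤ ‖f i‖ * (‖v‖ * ‖x i‖) :=
        mul_le_mul_of_nonneg_left (v.le_opNorm _) (norm_nonneg _)
    _ = ‖v‖ * (‖f i‖ * ‖x i‖) := by ring

lemma aux_fubini {ι κ : Type*} (f : ι → X →L[ℝ] ℝ) (x : ι → X)
    (g : κ → X →L[ℝ] ℝ) (z : κ → X)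
    (hf : Summable fun i => ‖f i‖ * ‖x i‖) (hg : Summable fun k => ‖g k‖ * ‖z k‖)
    (A B : X →L[ℝ] X)
    (hA : ∀ y, HasSum (fun i => f i y • x i) (A y))
    (hB : ∀ y, HasSum (fun k => g k y • z k) (B y)) :
    ∑' i, f i (B (x i)) = ∑' k, g k (A (z k)) := by
  set F : ι → κ → ℝ := fun i k => g k (x i) * f i (z k) with hF
  have hFsum : Summable (Function.uncurry F) := by
    apply Summable.of_norm_bounded
      (g := fun p : ι × κ => (‖f p.1‖ * ‖x p.1‖) * (‖g p.2‖ * ‖z p.2‖))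
      (hf.mul_of_nonneg hg (fun i => by positivity) (fun k => by positivity))
    rintro ⟨i, k⟩
    simp only [Function.uncurry, hF, Real.norm_eq_abs, abs_mul]
    calc |g k (x i)| * |f i (z k)| ≤ (‖g k‖ * ‖x i‖) * (‖f i‖ * ‖z k‖) := by
          apply mul_le_mul ((g k).le_opNorm _) ((f i).le_opNorm _) (abs_nonneg _)
          positivity
      _ = ‖f i‖ * ‖x i‖ * (‖g k‖ * ‖z k‖) := by ring
  have h1 : ∀ i, f i (B (x i)) = ∑' k, F i k := by
    intro i
    have h0 := ((f i).hasSum (hB (x i)))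
    have h2 : HasSum (fun k => F i k) (f i (B (x i))) := by
      convert h0 using 2 with k
      simp [hF, mul_comm]
    exact h2.tsum_eq.symm
  have h2 : ∀ k, g k (A (z k)) = ∑' i, F i k := by
    intro k
    have h0 := ((g k).hasSum (hA (z k)))
    have h3 : HasSum (fun i => F i k) (g k (A (z k))) := by
      convert h0 using 2 with i
      simp [hF, mul_comm]
    exact h3.tsum_eq.symm
  calc ∑' i, f i (B (x i)) = ∑' i, ∑' k, F i k := by simp only [h1]
    _ = ∑' k, ∑' i, F i k := (hFsum.tsum_comm).symm
    _ = ∑' k, g k (A (z k)) := by simp only [h2]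


lemma aux_rescale (f : ℕ → X →L[ℝ] ℝ) (x : ℕ → X)
    (hf : Summable fun n => ‖f n‖ * ‖x n‖) :
    ∃ (f' : ℕ → X →L[ℝ] ℝ) (x' : ℕ → X),
      (∀ n y, f' n y • x' n = f n y • x n) ∧
      (∀ (v : X →L[ℝ] X) (n : ℕ), f' n (v (x' n)) = f n (v (x n))) ∧
      Summable (fun n => ‖f' n‖) ∧
      Filter.Tendsto x' Filter.atTop (nhds 0) ∧
      ∃ M : ℝ, ∀ n, ‖x' n‖ ≤ M := by
  classical
  set c : ℕ → ℝ := fun n => ‖f n‖ * ‖x n‖ with hc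
  have hc0 : ∀ n, 0 ≤ c n := fun n => by positivity
  set r : ℕ → ℝ := fun n => ∑' k, c (k + n) with hr
  have hrs : ∀ n, Summable fun k => c (k + n) := fun n =>
    (summable_nat_add_iff n).2 hf
  have hr0 : ∀ n, 0 ≤ r n := fun n => tsum_nonneg (fun k => hc0 _)
  have hrrec : ∀ n, r n = c n + r (n + 1) := by
    intro n
    have := Summable.tsum_eq_zero_add (hrs n)
    simpa [hr, add_assoc, add_comm 1 n] using this
  have hcr : ∀ n, c n ≤ r n := by
    intro n; rw [hrrec n]; linarith [hr0 (n + 1)]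
  have hrmono : ∀ n, r (n + 1) ≤ r n := by
    intro n; rw [hrrec n]; linarith [hc0 n]
  have hranti : Antitone r := antitone_nat_of_succ_le hrmono
  have hrtend : Filter.Tendsto r Filter.atTop (nhds 0) := tendsto_sum_nat_add c
  set f' : ℕ → X →L[ℝ] ℝ := fun n =>
    if c n = 0 then 0 else (‖x n‖ / Real.sqrt (r n)) • f n with hf'
  set x' : ℕ → X := fun n =>
    if c n = 0 then 0 else (Real.sqrt (r n) / ‖x n‖) • x n with hx'
  have hpos : ∀ n, c n ≠ 0 → 0 < ‖x n‖ ∧ 0 < Real.sqrt (r n) := by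
    intro n hn
    have hcpos : 0 < c n := lt_of_le_of_ne (hc0 n) (Ne.symm hn)
    have hxn : x n ≠ 0 := by
      intro h
      apply hn
      rw [hc]
      simp [h]
    have hxpos : 0 < ‖x n‖ := norm_pos_iff.2 hxn
    exact ⟨hxpos, Real.sqrt_pos.2 (lt_of_lt_of_le hcpos (hcr n))⟩
  have hzero : ∀ n, c n = 0 → f n = 0 ∨ x n = 0 := by
    intro n hn
    rcases mul_eq_zero.1 hn with h | h
    · exact Or.inl (norm_eq_zero.1 h)
    · exact Or.inr (norm_eq_zero.1 h)
  refine ⟨f', x', ?_, ?_, ?_, ?_, Real.sqrt (r 0), ?_⟩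
  · -- smul identity
    intro n y
    by_cases hn : c n = 0
    · rcases hzero n hn with h | h <;> simp [hf', hx', hn, h]
    · obtain ⟨hx0, hs0⟩ := hpos n hn
      have h1 : ‖x n‖ ≠ 0 := ne_of_gt hx0
      have h2 : Real.sqrt (r n) ≠ 0 := ne_of_gt hs0
      simp only [hf', hx', if_neg hn, ContinuousLinearMap.coe_smul',
        Pi.smul_apply, smul_eq_mul, smul_smul]
      congr 1
      field_simp
  · -- application identity
    intro v n
    by_cases hn : c n = 0
    · rcases hzero n hn with h | h <;> simp [hf', hx', hn, h]
    · obtain ⟨hx0, hs0⟩ := hpos n hn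
      have h1 : ‖x n‖ ≠ 0 := ne_of_gt hx0
      have h2 : Real.sqrt (r n) ≠ 0 := ne_of_gt hs0
      simp only [hf', hx', if_neg hn, ContinuousLinearMap.coe_smul',
        Pi.smul_apply, smul_eq_mul, map_smul]
      field_simp
  · -- summability of ‖f'‖
    have hbound : ∀ n, ‖f' n‖ ≤ 2 * (Real.sqrt (r n) - Real.sqrt (r (n + 1))) := by
      intro n
      have hmono' : Real.sqrt (r (n + 1)) ≤ Real.sqrt (r n) :=
        Real.sqrt_le_sqrt (hrmono n)
      by_cases hn : c n = 0
      · have heq : r n = r (n + 1) := by rw [hrrec n, hn]; ring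
        simp [hf', hn, heq]
      · obtain ⟨hx0, hs0⟩ := hpos n hn
        have hnorm : ‖f' n‖ = c n / Real.sqrt (r n) := by
          have : f' n = (‖x n‖ / Real.sqrt (r n)) • f n := by simp [hf', if_neg hn]
          rw [this, norm_smul (‖x n‖ / Real.sqrt (r n)) (f n), Real.norm_eq_abs,
            abs_of_nonneg (by positivity), hc]
          simp only
          field_simp
        rw [hnorm, div_le_iff₀ hs0]
        have ha : Real.sqrt (r n) ^ 2 = r n := Real.sq_sqrt (hr0 n)
        have hb : Real.sqrt (r (n + 1)) ^ 2 = r (n + 1) := Real.sq_sqrt (hr0 (n + 1))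
        have hcn : c n = r n - r (n + 1) := by rw [hrrec n]; ring
        nlinarith [Real.sqrt_nonneg (r (n + 1)), Real.sqrt_nonneg (r n)]
    apply Summable.of_nonneg_of_le (fun n => norm_nonneg _) hbound
    apply summable_of_sum_range_le
      (c := 2 * Real.sqrt (r 0))
      (f := fun n => 2 * (Real.sqrt (r n) - Real.sqrt (r (n + 1))))
      (fun n => by
        show (0:ℝ) ≤ 2 * (Real.sqrt (r n) - Real.sqrt (r (n + 1)))
        have := Real.sqrt_le_sqrt (hrmono n)
        linarith)
    intro N
    have heq : ∑ i ∈ Finset.range N, 2 * (Real.sqrt (r i) - Real.sqrt (r (i + 1)))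
        = 2 * (Real.sqrt (r 0) - Real.sqrt (r N)) := by
      rw [← Finset.mul_sum, Finset.sum_range_sub' (fun i => Real.sqrt (r i))]
    rw [heq]
    nlinarith [Real.sqrt_nonneg (r N)]
  · -- tendsto 0
    apply squeeze_zero_norm (a := fun n => Real.sqrt (r n))
    · intro n
      by_cases hn : c n = 0
      · simp [hx', hn, Real.sqrt_nonneg]
      · obtain ⟨hx0, hs0⟩ := hpos n hn
        simp only [hx', if_neg hn, norm_smul, Real.norm_eq_abs]
        rw [abs_of_nonneg (by positivity), div_mul_cancel₀ _ (ne_of_gt hx0)]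
    · have h0 : Filter.Tendsto (fun n => Real.sqrt (r n)) Filter.atTop
          (nhds (Real.sqrt 0)) := (Real.continuous_sqrt.tendsto 0).comp hrtend
      simpa using h0
  · -- uniform bound
    intro n
    have h1 : ‖x' n‖ ≤ Real.sqrt (r n) := by
      by_cases hn : c n = 0
      · simp [hx', hn, Real.sqrt_nonneg]
      · obtain ⟨hx0, hs0⟩ := hpos n hn
        simp only [hx', if_neg hn, norm_smul, Real.norm_eq_abs]
        rw [abs_of_nonneg (by positivity), div_mul_cancel₀ _ (ne_of_gt hx0)]
    exact h1.trans (Real.sqrt_le_sqrt (hranti (Nat.zero_le n)))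

lemma aux_decomp (T : X →L[ℝ] X)
    (hT : FiniteDimensional ℝ (LinearMap.range (T : X →ₗ[ℝ] X))) :
    ∃ (k : ℕ) (g : Fin k → X →L[ℝ] ℝ) (z : Fin k → X),
      ∀ y, HasSum (fun i => g i y • z i) (T y) := by
  classical
  set E := LinearMap.range (T : X →ₗ[ℝ] X) with hE
  haveI := hT
  set b := Module.finBasis ℝ E with hb
  set k := Module.finrank ℝ E
  have hmem : ∀ y, T y ∈ E := fun y => LinearMap.mem_range_self _ y
  set Tc : X →L[ℝ] E := T.codRestrict E hmem with hTc
  refine ⟨k, fun i => (LinearMap.toContinuousLinearMap (b.coord i)).comp Tc,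
    fun i => (b i : X), fun y => ?_⟩
  have key : (∑ i, (b.coord i) (Tc y) • ((b i : X))) = T y := by
    have hrepr : (∑ i, (b.coord i) (Tc y) • (b i)) = Tc y := by
      simpa [Module.Basis.coord_apply] using b.sum_repr (Tc y)
    calc (∑ i, (b.coord i) (Tc y) • ((b i : X)))
        = ((∑ i, (b.coord i) (Tc y) • (b i) : E) : X) := by
          push_cast
          rfl
      _ = ((Tc y : E) : X) := by rw [hrepr]
      _ = T y := rfl
  have h2 : (fun i : Fin k => ((LinearMap.toContinuousLinearMap (b.coord i)).comp Tc) y • ((b i : X)))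
      = fun i : Fin k => (b.coord i) (Tc y) • ((b i : X)) := by
    funext i
    rfl
  rw [h2, ← key]
  exact hasSum_fintype _

lemma aux_trace_unique [CompleteSpace X] (hAP : HasAP X) (S : X →L[ℝ] X)
    (f : ℕ → X →L[ℝ] ℝ) (x : ℕ → X)
    (hf : Summable fun n => ‖f n‖ * ‖x n‖)
    (hS : ∀ y, HasSum (fun n => f n y • x n) (S y))
    (f₂ : ℕ → X →L[ℝ] ℝ) (x₂ : ℕ → X)
    (hf₂ : Summable fun n => ‖f₂ n‖ * ‖x₂ n‖)
    (hS₂ : ∀ y, HasSum (fun n => f₂ n y • x₂ n) (S y)) :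
    ∑' n, f n (x n) = ∑' n, f₂ n (x₂ n) := by
  obtain ⟨F, Y, hsmul, happ, hFsum, hYtend, M, hM⟩ := aux_rescale f x hf
  obtain ⟨F₂, Y₂, hsmul₂, happ₂, hFsum₂, hYtend₂, M₂, hM₂⟩ := aux_rescale f₂ x₂ hf₂
  have hMnn : 0 ≤ M := le_trans (norm_nonneg _) (hM 0)
  have hM₂nn : 0 ≤ M₂ := le_trans (norm_nonneg _) (hM₂ 0)
  have hFrep : ∀ y, HasSum (fun n => F n y • Y n) (S y) := by
    intro y
    have he : (fun n => F n y • Y n) = fun n => f n y • x n := funext fun n => hsmul n y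
    rw [he]; exact hS y
  have hF₂rep : ∀ y, HasSum (fun n => F₂ n y • Y₂ n) (S y) := by
    intro y
    have he : (fun n => F₂ n y • Y₂ n) = fun n => f₂ n y • x₂ n :=
      funext fun n => hsmul₂ n y
    rw [he]; exact hS₂ y
  have hFsum' : Summable fun n => ‖F n‖ * ‖Y n‖ :=
    Summable.of_nonneg_of_le (fun n => by positivity)
      (fun n => by
        calc ‖F n‖ * ‖Y n‖ ≤ ‖F n‖ * M :=
              mul_le_mul_of_nonneg_left (hM n) (norm_nonneg _)
          _ = M * ‖F n‖ := by ring)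
      (hFsum.mul_left M)
  have hF₂sum' : Summable fun n => ‖F₂ n‖ * ‖Y₂ n‖ :=
    Summable.of_nonneg_of_le (fun n => by positivity)
      (fun n => by
        calc ‖F₂ n‖ * ‖Y₂ n‖ ≤ ‖F₂ n‖ * M₂ :=
              mul_le_mul_of_nonneg_left (hM₂ n) (norm_nonneg _)
          _ = M₂ * ‖F₂ n‖ := by ring)
      (hFsum₂.mul_left M₂)
  have hEqTr : ∑' n, f n (x n) = ∑' n, F n (Y n) := by
    apply tsum_congr
    intro n
    simpa using (happ (ContinuousLinearMap.id ℝ X) n).symm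
  have hEqTr₂ : ∑' n, f₂ n (x₂ n) = ∑' n, F₂ n (Y₂ n) := by
    apply tsum_congr
    intro n
    simpa using (happ₂ (ContinuousLinearMap.id ℝ X) n).symm
  rw [hEqTr, hEqTr₂]
  set K : Set X := insert 0 (Set.range Y) ∪ insert 0 (Set.range Y₂) with hK
  have hKcpt : IsCompact K :=
    (hYtend.isCompact_insert_range).union (hYtend₂.isCompact_insert_range)
  set C : ℝ := (∑' n, ‖F n‖) + (∑' n, ‖F₂ n‖) with hC
  have hCnn : 0 ≤ C := by
    apply add_nonneg <;> exact tsum_nonneg fun n => norm_nonneg _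
  set Δ : ℝ := (∑' n, F n (Y n)) - (∑' n, F₂ n (Y₂ n)) with hΔ
  have key : ∀ ε : ℝ, 0 < ε → |Δ| ≤ ε * C := by
    intro ε hε
    obtain ⟨T, hTfin, hTapprox⟩ := hAP K hKcpt ε hε
    obtain ⟨k, g, z, hTrep⟩ := aux_decomp T hTfin
    have hgsum : Summable fun i : Fin k => ‖g i‖ * ‖z i‖ := Summable.of_finite
    have e1 : ∑' n, F n (T (Y n)) = ∑' i : Fin k, g i (S (z i)) :=
      aux_fubini F Y g z hFsum' hgsum S T hFrep hTrep
    have e2 : ∑' n, F₂ n (T (Y₂ n)) = ∑' i : Fin k, g i (S (z i)) :=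
      aux_fubini F₂ Y₂ g z hF₂sum' hgsum S T hF₂rep hTrep
    have hsummand : Summable fun n => F n (Y n) :=
      aux_summable_comp F Y hFsum' (ContinuousLinearMap.id ℝ X)
    have hsummand₂ : Summable fun n => F₂ n (Y₂ n) :=
      aux_summable_comp F₂ Y₂ hF₂sum' (ContinuousLinearMap.id ℝ X)
    have hsummandT : Summable fun n => F n (T (Y n)) :=
      aux_summable_comp F Y hFsum' T
    have hsummandT₂ : Summable fun n => F₂ n (T (Y₂ n)) :=
      aux_summable_comp F₂ Y₂ hF₂sum' T
    have hb1 : |(∑' n, F n (Y n)) - (∑' n, F n (T (Y n)))| ≤ ε * ∑' n, ‖F n‖ := by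
      rw [← Summable.tsum_sub hsummand hsummandT]
      have hbd : ‖∑' n, (F n (Y n) - F n (T (Y n)))‖ ≤ (∑' n, ‖F n‖) * ε := by
        apply tsum_of_norm_bounded ((hFsum.hasSum).mul_right ε)
        intro n
        have hmem : Y n ∈ K := Or.inl (Set.mem_insert_of_mem _ ⟨n, rfl⟩)
        have h1 : ‖T (Y n) - Y n‖ ≤ ε := hTapprox _ hmem
        calc ‖F n (Y n) - F n (T (Y n))‖ = ‖F n (Y n - T (Y n))‖ := by
              rw [← map_sub]
          _ ≤ ‖F n‖ * ‖Y n - T (Y n)‖ := (F n).le_opNorm _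
          _ ≤ ‖F n‖ * ε :=
              mul_le_mul_of_nonneg_left (by rw [norm_sub_rev]; exact h1) (norm_nonneg _)
      calc |(∑' n, (F n (Y n) - F n (T (Y n))))| ≤ (∑' n, ‖F n‖) * ε := hbd
        _ = ε * ∑' n, ‖F n‖ := by ring
    have hb2 : |(∑' n, F₂ n (Y₂ n)) - (∑' n, F₂ n (T (Y₂ n)))| ≤ ε * ∑' n, ‖F₂ n‖ := by
      rw [← Summable.tsum_sub hsummand₂ hsummandT₂]
      have hbd : ‖∑' n, (F₂ n (Y₂ n) - F₂ n (T (Y₂ n)))‖ ≤ (∑' n, ‖F₂ n‖) * ε := by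
        apply tsum_of_norm_bounded ((hFsum₂.hasSum).mul_right ε)
        intro n
        have hmem : Y₂ n ∈ K := Or.inr (Set.mem_insert_of_mem _ ⟨n, rfl⟩)
        have h1 : ‖T (Y₂ n) - Y₂ n‖ ≤ ε := hTapprox _ hmem
        calc ‖F₂ n (Y₂ n) - F₂ n (T (Y₂ n))‖ = ‖F₂ n (Y₂ n - T (Y₂ n))‖ := by
              rw [← map_sub]
          _ ≤ ‖F₂ n‖ * ‖Y₂ n - T (Y₂ n)‖ := (F₂ n).le_opNorm _
          _ ≤ ‖F₂ n‖ * ε :=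
              mul_le_mul_of_nonneg_left (by rw [norm_sub_rev]; exact h1) (norm_nonneg _)
      calc |(∑' n, (F₂ n (Y₂ n) - F₂ n (T (Y₂ n))))| ≤ (∑' n, ‖F₂ n‖) * ε := hbd
        _ = ε * ∑' n, ‖F₂ n‖ := by ring
    have hrw : Δ = ((∑' n, F n (Y n)) - (∑' n, F n (T (Y n))))
        - ((∑' n, F₂ n (Y₂ n)) - (∑' n, F₂ n (T (Y₂ n)))) := by
      rw [hΔ, e1, e2]; ring
    rw [hrw]
    calc |_| ≤ |(∑' n, F n (Y n)) - (∑' n, F n (T (Y n)))|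
        + |(∑' n, F₂ n (Y₂ n)) - (∑' n, F₂ n (T (Y₂ n)))| := abs_sub _ _
      _ ≤ ε * ∑' n, ‖F n‖ + ε * ∑' n, ‖F₂ n‖ := add_le_add hb1 hb2
      _ = ε * C := by rw [hC]; ring
  have hΔ0 : Δ = 0 := by
    by_contra h
    have habs : 0 < |Δ| := abs_pos.2 h
    have hk := key (|Δ| / (2 * (C + 1))) (by positivity)
    have hle : |Δ| / (2 * (C + 1)) * C < |Δ| := by
      rw [div_mul_eq_mul_div, div_lt_iff₀ (by positivity)]
      nlinarith
    linarith
  linarith [hΔ0]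

/-- Proposition 1.2, (iii) => (i). -/
theorem trace_bound_of_uap {X : Type*} [NormedAddCommGroup X] [NormedSpace ℝ X]
    [CompleteSpace X]
    (hrefl : Function.Surjective (NormedSpace.inclusionInDoubleDual ℝ X))
    (hAP : HasAP X)
    (α β : ℝ) (hα : 0 < α) (hβ : 0 < β) (n : ℕ) (hn : 1 ≤ n)
    (hU : ∀ E : Submodule ℝ X, FiniteDimensional ℝ E → Module.finrank ℝ E ≤ n →
      ∃ u : X →L[ℝ] X, (∀ e ∈ E, u e = e) ∧ ‖u‖ ≤ α ∧ IsNuclear u ∧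
        NuclearNorm u ≤ β * n)
    (T₁ T₂ : X →L[ℝ] X) (h₁ : IsNuclear T₁) (h₂ : IsNuclear T₂)
    (hrk : Module.rank ℝ (LinearMap.range ((T₁ + T₂ : X →L[ℝ] X) : X →ₗ[ℝ] X)) ≤ n)
    (t : ℝ) (ht : IsTraceOf (T₁ + T₂) t) :
    |t| ≤ α * NuclearNorm T₁ + β * n * ‖T₂‖ := by
  classical
  set S : X →L[ℝ] X := T₁ + T₂ with hSdef
  obtain ⟨f, x, hf, hSrep, htr⟩ := ht
  set E : Submodule ℝ X := LinearMap.range ((S : X →L[ℝ] X) : X →ₗ[ℝ] X) with hE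
  have hEfin : FiniteDimensional ℝ E := by
    have hlt : Module.rank ℝ E < Cardinal.aleph0 :=
      lt_of_le_of_lt hrk (Cardinal.nat_lt_aleph0 n)
    exact IsNoetherian.iff_fg.1 (IsNoetherian.iff_rank_lt_aleph0.2 hlt)
  have hEdim : Module.finrank ℝ E ≤ n := Module.finrank_le_of_rank_le hrk
  obtain ⟨u, hufix, hunorm, hunuc, huN⟩ := hU E hEfin hEdim
  have main : ∀ ε : ℝ, 0 < ε →
      |t| ≤ α * (NuclearNorm T₁ + ε) + (β * n + ε) * ‖T₂‖ := by
    intro ε hε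
    have huset : { c | ∃ (g : ℕ → (X →L[ℝ] ℝ)) (z : ℕ → X),
        Summable (fun n => ‖g n‖ * ‖z n‖) ∧ (∑' n, ‖g n‖ * ‖z n‖) = c ∧
        ∀ y, HasSum (fun n => g n y • z n) (u y) }.Nonempty := by
      obtain ⟨g, z, hgz, hrep⟩ := hunuc
      exact ⟨_, g, z, hgz, rfl, hrep⟩
    obtain ⟨cu, ⟨g, z, hg, hgc, hurep⟩, hcu⟩ := Real.lt_sInf_add_pos huset hε
    have hcu0 : cu < NuclearNorm u + ε := hcu
    have hcu' : cu < β * n + ε := by linarith [huN]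
    have h₁set : { c | ∃ (h : ℕ → (X →L[ℝ] ℝ)) (w : ℕ → X),
        Summable (fun n => ‖h n‖ * ‖w n‖) ∧ (∑' n, ‖h n‖ * ‖w n‖) = c ∧
        ∀ y, HasSum (fun n => h n y • w n) (T₁ y) }.Nonempty := by
      obtain ⟨h, w, hhw, hrep⟩ := h₁
      exact ⟨_, h, w, hhw, rfl, hrep⟩
    obtain ⟨c₁, ⟨h, w, hh, hhc, h₁rep⟩, hc₁⟩ := Real.lt_sInf_add_pos h₁set hε
    have hc₁' : c₁ < NuclearNorm T₁ + ε := hc₁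
    have hc₁nn : 0 ≤ c₁ := by
      rw [← hhc]; exact tsum_nonneg fun m => by positivity
    have huS : ∀ y, u (S y) = S y := fun y =>
      hufix (S y) (LinearMap.mem_range_self _ y)
    have hSrep' : ∀ y, HasSum (fun m => f m y • u (x m)) (S y) := by
      intro y
      have h0 := u.hasSum (hSrep y)
      simp only [map_smul] at h0
      rwa [huS y] at h0
    have hf' : Summable fun m => ‖f m‖ * ‖u (x m)‖ :=
      Summable.of_nonneg_of_le (fun m => by positivity)
        (fun m => by
          calc ‖f m‖ * ‖u (x m)‖ ≤ ‖f m‖ * (‖u‖ * ‖x m‖) :=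
                mul_le_mul_of_nonneg_left (u.le_opNorm _) (norm_nonneg _)
            _ = ‖u‖ * (‖f m‖ * ‖x m‖) := by ring)
        (hf.mul_left ‖u‖)
    have ht1 : t = ∑' m, f m (u (x m)) := by
      rw [← htr.tsum_eq]
      exact aux_trace_unique hAP S f x hf hSrep f (fun m => u (x m)) hf' hSrep'
    have ht2 : ∑' m, f m (u (x m)) = ∑' i, g i (S (z i)) :=
      aux_fubini f x g z hf hg S u hSrep hurep
    have hsplit : ∑' i, g i (S (z i))
        = (∑' i, g i (T₁ (z i))) + ∑' i, g i (T₂ (z i)) := by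
      rw [← Summable.tsum_add (aux_summable_comp g z hg T₁) (aux_summable_comp g z hg T₂)]
      apply tsum_congr
      intro i
      simp [hSdef]
    have hterm1 : ∑' i, g i (T₁ (z i)) = ∑' m, h m (u (w m)) :=
      aux_fubini g z h w hg hh u T₁ hurep h₁rep
    have hb1 : |∑' m, h m (u (w m))| ≤ α * c₁ := by
      have hs : HasSum (fun m => α * (‖h m‖ * ‖w m‖)) (α * c₁) := by
        have h0 := (hh.hasSum).mul_left α
        rwa [hhc] at h0
      have hbd : ‖∑' m, h m (u (w m))‖ ≤ α * c₁ := by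
        apply tsum_of_norm_bounded hs
        intro m
        calc ‖h m (u (w m))‖ ≤ ‖h m‖ * ‖u (w m)‖ := (h m).le_opNorm _
          _ ≤ ‖h m‖ * (‖u‖ * ‖w m‖) :=
              mul_le_mul_of_nonneg_left (u.le_opNorm _) (norm_nonneg _)
          _ ≤ ‖h m‖ * (α * ‖w m‖) :=
              mul_le_mul_of_nonneg_left
                (mul_le_mul_of_nonneg_right hunorm (norm_nonneg _)) (norm_nonneg _)
          _ = α * (‖h m‖ * ‖w m‖) := by ring
      simpa using hbd
    have hb2 : |∑' i, g i (T₂ (z i))| ≤ cu * ‖T₂‖ := by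
      have hs : HasSum (fun i => ‖g i‖ * ‖z i‖ * ‖T₂‖) (cu * ‖T₂‖) := by
        have h0 := (hg.hasSum).mul_right ‖T₂‖
        rwa [hgc] at h0
      have hbd : ‖∑' i, g i (T₂ (z i))‖ ≤ cu * ‖T₂‖ := by
        apply tsum_of_norm_bounded hs
        intro i
        calc ‖g i (T₂ (z i))‖ ≤ ‖g i‖ * ‖T₂ (z i)‖ := (g i).le_opNorm _
          _ ≤ ‖g i‖ * (‖T₂‖ * ‖z i‖) :=
              mul_le_mul_of_nonneg_left (T₂.le_opNorm _) (norm_nonneg _)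
          _ = ‖g i‖ * ‖z i‖ * ‖T₂‖ := by ring
      simpa using hbd
    have hcomb : |t| ≤ α * c₁ + cu * ‖T₂‖ := by
      rw [ht1, ht2, hsplit, hterm1]
      exact le_trans (abs_add_le _ _) (add_le_add hb1 hb2)
    have hcu'' : cu * ‖T₂‖ ≤ (β * n + ε) * ‖T₂‖ :=
      mul_le_mul_of_nonneg_right (le_of_lt hcu') (norm_nonneg _)
    have hc₁'' : α * c₁ ≤ α * (NuclearNorm T₁ + ε) :=
      mul_le_mul_of_nonneg_left (le_of_lt hc₁') (le_of_lt hα)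
    linarith
  by_contra hcon
  push_neg at hcon
  set D : ℝ := |t| - (α * NuclearNorm T₁ + β * n * ‖T₂‖) with hD
  have hDpos : 0 < D := by rw [hD]; linarith
  have hmain := main (D / (2 * (α + ‖T₂‖ + 1))) (by positivity)
  have hexp : α * (NuclearNorm T₁ + D / (2 * (α + ‖T₂‖ + 1)))
      + (β * n + D / (2 * (α + ‖T₂‖ + 1))) * ‖T₂‖
      = α * NuclearNorm T₁ + β * n * ‖T₂‖
        + D / (2 * (α + ‖T₂‖ + 1)) * (α + ‖T₂‖) := by ring
  rw [hexp] at hmain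
  have hsmall : D / (2 * (α + ‖T₂‖ + 1)) * (α + ‖T₂‖) < D := by
    rw [div_mul_eq_mul_div, div_lt_iff₀ (by positivity)]
    nlinarith [norm_nonneg T₂]
  have : |t| < |t| := by
    calc |t| ≤ α * NuclearNorm T₁ + β * n * ‖T₂‖
        + D / (2 * (α + ‖T₂‖ + 1)) * (α + ‖T₂‖) := hmain
      _ < α * NuclearNorm T₁ + β * n * ‖T₂‖ + D := by linarith
      _ = |t| := by rw [hD]; ring
  exact lt_irrefl _ this
end

section
/- Let f : ℂ → ℂ be an entire function with f(0) = 1 which does not vanish on the disc D_R = {z : |z| < R}, and suppose there are constants A ≥ 0 and B ≥ 0 such that |f(z)| ≤ exp(A + B|z|) for all z. Then |f'(0)| ≤ (2/R)·A + 2B. -/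
open Metric Complex

/-- Existence of a holomorphic logarithm on a sub-ball. -/
lemma exists_log_aux (f : ℂ → ℂ) (R s : ℝ) (hs : 0 < s) (hsR : s < R)
    (hf : Differentiable ℂ f) (hf0 : f 0 = 1)
    (hfz : ∀ z ∈ ball (0 : ℂ) R, f z ≠ 0) :
    ∃ h : ℂ → ℂ, h 0 = 0 ∧ (∀ z ∈ ball (0 : ℂ) s, HasDerivAt h (deriv f z / f z) z) ∧
      ∀ z ∈ ball (0 : ℂ) s, f z = Complex.exp (h z) := by
  set g : ℂ → ℂ := fun z => deriv f z / f z with hgdef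
  have hdf : Differentiable ℂ (deriv f) := by
    have := (analyticOnNhd_univ_iff_differentiable.2 hf).deriv
    exact fun z => (this z trivial).differentiableAt
  set s' : NNReal := ⟨(s + R) / 2, by linarith⟩ with hs'def
  have hss' : s < (s' : ℝ) := by simp only [hs'def]; show s < (s + R) / 2; linarith
  have hs'R : (s' : ℝ) < R := by simp only [hs'def]; show (s + R) / 2 < R; linarith
  have hsub : closedBall (0 : ℂ) s' ⊆ ball (0 : ℂ) R := closedBall_subset_ball hs'R
  have hg : DifferentiableOn ℂ g (closedBall (0 : ℂ) s') :=
    DifferentiableOn.div hdf.differentiableOn hf.differentiableOn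
      (fun z hz => hfz z (hsub hz))
  have hs'pos : 0 < s' := by
    rw [← NNReal.coe_lt_coe, NNReal.coe_zero]
    exact lt_trans hs hss'
  have hps : HasFPowerSeriesOnBall g (cauchyPowerSeries g 0 s') 0 s' :=
    hg.hasFPowerSeriesOnBall hs'pos
  set p := cauchyPowerSeries g 0 s' with hpdef
  set G : ℕ → ℂ → ℂ := fun n z => (p.coeff n / (n + 1)) * z ^ (n + 1) with hGdef
  set G' : ℕ → ℂ → ℂ := fun n z => p.coeff n * z ^ n with hG'def
  have hderivG : ∀ n z, HasDerivAt (G n) (G' n z) z := by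
    intro n z
    have h1 : HasDerivAt (fun x : ℂ => x ^ (n + 1)) ((n + 1 : ℕ) * z ^ n) z :=
      hasDerivAt_pow (n + 1) z
    have h2 := h1.const_mul (p.coeff n / ((n : ℂ) + 1))
    refine h2.congr_deriv ?_
    have : ((n : ℂ) + 1) ≠ 0 := Nat.cast_add_one_ne_zero n
    push_cast
    show _ = p.coeff n * z ^ n
    rw [div_mul_eq_mul_div, div_eq_iff this]
    ring
  set u : ℕ → ℝ := fun n => ‖p n‖ * s ^ n with hudef
  have hu : Summable u := by
    have hlt : (s.toNNReal : ENNReal) < p.radius := by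
      refine lt_of_lt_of_le ?_ hps.r_le
      rw [ENNReal.coe_lt_coe, ← NNReal.coe_lt_coe]
      simpa [Real.coe_toNNReal _ hs.le] using hss'
    simpa [hudef, Real.coe_toNNReal _ hs.le] using p.summable_norm_mul_pow hlt
  have hbound : ∀ n, ∀ y ∈ ball (0 : ℂ) s, ‖G' n y‖ ≤ u n := by
    intro n y hy
    simp only [hG'def, norm_mul, norm_pow, hudef]
    have h1 : ‖p.coeff n‖ = ‖p n‖ := (p.norm_apply_eq_norm_coef (n := n)).symm
    have h2 : ‖y‖ ≤ s := le_of_lt (by simpa using hy)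
    exact mul_le_mul (le_of_eq h1) (pow_le_pow_left₀ (norm_nonneg _) h2 n) (by positivity)
      (norm_nonneg _)
  have hG0 : ∀ n, G n 0 = 0 := fun n => by simp [hGdef]
  set h : ℂ → ℂ := fun z => ∑' n, G n z with hhdef
  have hh0 : h 0 = 0 := by simp [hhdef, hG0]
  have hsum0 : Summable fun n => G n (0 : ℂ) := by
    simp only [hG0]; exact summable_zero
  have hsumid : ∀ y ∈ ball (0 : ℂ) s, HasSum (fun n => G' n y) (g y) := by
    intro y hy
    have hys : ‖y‖ < s := by simpa using hy
    have hmem : y ∈ Metric.eball (0 : ℂ) s' := by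
      rw [Metric.mem_eball, edist_zero_right]
      exact_mod_cast (show (‖y‖₊ : NNReal) < s' by
        rw [← NNReal.coe_lt_coe, coe_nnnorm]; exact lt_trans hys hss')
    have hsum := hps.hasSum hmem
    simp only [zero_add] at hsum
    have heq : (fun n => p n fun _ => y) = fun n => G' n y := by
      funext n
      rw [p.apply_eq_pow_smul_coeff, smul_eq_mul]
      simp only [hG'def]; ring
    rwa [heq] at hsum
  have hderivh : ∀ y ∈ ball (0 : ℂ) s, HasDerivAt h (g y) y := by
    intro y hy
    have := hasDerivAt_tsum_of_isPreconnected hu isOpen_ball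
      (convex_ball (0 : ℂ) s).isPreconnected (fun n z _ => hderivG n z)
      hbound (mem_ball_self hs) hsum0 hy
    rwa [(hsumid y hy).tsum_eq] at this
  refine ⟨h, hh0, hderivh, ?_⟩
  -- now show f = exp h on the ball
  set F : ℂ → ℂ := fun z => f z * Complex.exp (-h z) with hFdef
  have hderivF : ∀ z ∈ ball (0 : ℂ) s, HasDerivAt F 0 z := by
    intro z hz
    have hfz' : f z ≠ 0 := hfz z (ball_subset_ball hsR.le hz)
    have h1 : HasDerivAt f (deriv f z) z := (hf z).hasDerivAt
    have h2 : HasDerivAt (fun w => Complex.exp (-h w)) (-(g z) * Complex.exp (-h z)) z := by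
      have := ((hderivh z hz).neg).cexp
      simpa [mul_comm] using this
    have := h1.mul h2
    refine this.congr_deriv ?_
    rw [hgdef]
    field_simp
    ring
  have hconst : ∀ z ∈ ball (0 : ℂ) s, F z = F 0 := by
    intro z hz
    refine Convex.is_const_of_fderivWithin_eq_zero (𝕜 := ℂ) (convex_ball (0 : ℂ) s) ?_ ?_ hz
      (mem_ball_self hs)
    · exact fun w hw => ((hderivF w hw).differentiableAt).differentiableWithinAt
    · intro w hw
      rw [fderivWithin_of_isOpen isOpen_ball hw]
      have := (hderivF w hw).hasFDerivAt.fderiv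
      rw [this]
      ext v
      simp
  intro z hz
  have := hconst z hz
  simp only [hFdef, hf0, hh0, neg_zero, Complex.exp_zero, mul_one, one_mul] at this
  have hexp : Complex.exp (-h z) ≠ 0 := Complex.exp_ne_zero _
  rw [Complex.exp_neg, ← div_eq_mul_inv, div_eq_one_iff_eq (Complex.exp_ne_zero _)] at this
  linear_combination this

/-- If `f` is entire, `f 0 = 1`, `f` does not vanish on the disc of radius `R`, and
`|f z| ≤ exp (A + B |z|)` for all `z` with `A, B ≥ 0`, then `|f'(0)| ≤ (2/R) A + 2B`. -/
theorem deriv_bound_of_log_bound (f : ℂ → ℂ) (R A B : ℝ) (hR : 0 < R)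
    (hf : Differentiable ℂ f) (hf0 : f 0 = 1)
    (hfz : ∀ z ∈ ball (0 : ℂ) R, f z ≠ 0)
    (hA : 0 ≤ A) (hB : 0 ≤ B)
    (hbd : ∀ z : ℂ, ‖f z‖ ≤ Real.exp (A + B * ‖z‖)) :
    ‖deriv f 0‖ ≤ (2 / R) * A + 2 * B := by
  have key : ∀ s : ℝ, 0 < s → s < R → ‖deriv f 0‖ ≤ 2 * (A + B * s + (R - s)) / s := by
    intro s hs hsR
    obtain ⟨h, hh0, hd, hexp⟩ := exists_log_aux f R s hs hsR hf hf0 hfz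
    set M : ℝ := A + B * s + (R - s) with hMdef
    have hRs : 0 < R - s := by linarith
    have hM : 0 < M := by nlinarith [mul_nonneg hB hs.le]
    have hre : ∀ z ∈ ball (0 : ℂ) s, (h z).re ≤ A + B * s := by
      intro z hz
      have h1 : ‖f z‖ = Real.exp ((h z).re) := by
        rw [hexp z hz, Complex.norm_exp]
      have h2 := hbd z
      rw [h1] at h2
      have h3 := Real.exp_le_exp.mp h2
      have h4 : ‖z‖ ≤ s := (mem_ball_zero_iff.mp hz).le
      nlinarith
    set φ : ℂ → ℂ := fun z => h z / (2 * (M : ℂ) - h z) with hφdef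
    have hreden : ∀ z : ℂ, (2 * (M : ℂ) - h z).re = 2 * M - (h z).re := by
      intro z; simp
    have himden : ∀ z : ℂ, (2 * (M : ℂ) - h z).im = -(h z).im := by
      intro z; simp
    have hden : ∀ z ∈ ball (0 : ℂ) s, (2 * (M : ℂ) - h z) ≠ 0 := by
      intro z hz hzero
      have h1 : (2 * (M : ℂ) - h z).re = 0 := by rw [hzero]; simp
      rw [hreden] at h1
      have h2 := hre z hz
      nlinarith
    have hφdiff : DifferentiableOn ℂ φ (ball (0 : ℂ) s) := by
      intro z hz
      exact (((hd z hz).differentiableAt).div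
        ((differentiableAt_const _).sub (hd z hz).differentiableAt)
        (hden z hz)).differentiableWithinAt
    have hφ0 : φ 0 = 0 := by simp [hφdef, hh0]
    have hmaps : Set.MapsTo φ (ball (0 : ℂ) s) (ball (φ 0) 1) := by
      intro z hz
      rw [hφ0, mem_ball_zero_iff, hφdef]
      simp only [norm_div]
      have hlt : ‖h z‖ < ‖2 * (M : ℂ) - h z‖ := by
        have e1 : ‖h z‖ ^ 2 < ‖2 * (M : ℂ) - h z‖ ^ 2 := by
          rw [Complex.sq_norm, Complex.sq_norm,
            Complex.normSq_apply, Complex.normSq_apply, hreden, himden]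
          have h2 := hre z hz
          nlinarith [mul_pos hM hRs]
        exact lt_of_pow_lt_pow_left₀ 2 (norm_nonneg _) e1
      rw [div_lt_one (lt_of_le_of_lt (norm_nonneg _) hlt)]
      exact hlt
    have hschwarz : ‖deriv φ 0‖ ≤ 1 / s :=
      Complex.norm_deriv_le_div_of_mapsTo_ball hφdiff (hmaps.mono_right ball_subset_closedBall) hs
    have hd0 : HasDerivAt h (deriv f 0) 0 := by
      have := hd 0 (mem_ball_self hs); rwa [hf0, div_one] at this
    have hdend : HasDerivAt (fun w => 2 * (M : ℂ) - h w) (-(deriv f 0)) 0 :=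
      hd0.const_sub (2 * (M : ℂ))
    have hφd : HasDerivAt φ
        ((deriv f 0 * (2 * (M : ℂ) - h 0) - h 0 * -(deriv f 0)) / (2 * (M : ℂ) - h 0) ^ 2) 0 :=
      hd0.div hdend (hden 0 (mem_ball_self hs))
    have hMC : (M : ℂ) ≠ 0 := by exact_mod_cast hM.ne'
    have hφderiv : deriv φ 0 = deriv f 0 / (2 * (M : ℂ)) := by
      rw [hφd.deriv, hh0]
      field_simp
      ring
    rw [hφderiv] at hschwarz
    rw [norm_div] at hschwarz
    have hnorm2M : ‖(2 * (M : ℂ))‖ = 2 * M := by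
      simp [abs_of_pos hM]
    rw [hnorm2M, div_le_div_iff₀ (by positivity) hs] at hschwarz
    rw [le_div_iff₀ hs]
    linarith
  -- pass to the limit s → R⁻
  have hlim : Filter.Tendsto (fun s : ℝ => 2 * (A + B * s + (R - s)) / s)
      (nhdsWithin R (Set.Iio R)) (nhds (2 * (A + B * R + (R - R)) / R)) := by
    apply Filter.Tendsto.mono_left ?_ nhdsWithin_le_nhds
    exact (ContinuousAt.div (by fun_prop) continuousAt_id hR.ne').tendsto
  have hev : ∀ᶠ s in nhdsWithin R (Set.Iio R),
      ‖deriv f 0‖ ≤ 2 * (A + B * s + (R - s)) / s := by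
    have h1 : ∀ᶠ s : ℝ in nhdsWithin R (Set.Iio R), 0 < s :=
      Filter.Eventually.filter_mono nhdsWithin_le_nhds (eventually_gt_nhds hR)
    filter_upwards [h1, self_mem_nhdsWithin] with s hs0 hsR
    exact key s hs0 hsR
  have hfin := ge_of_tendsto hlim hev
  calc ‖deriv f 0‖ ≤ 2 * (A + B * R + (R - R)) / R := hfin
    _ = (2 / R) * A + 2 * B := by field_simp; ring
end

section
/- Let E be an n-dimensional subspace of ℓ∞^{2n} (n ≥ 2) and suppose E embeds with isomorphism constant K into ℓ∞^{k}. If additionally E can be realized as a subspace H of G = ℓ∞^{2n} such that the quotient G/H has Banach–Mazur distance d to Euclidean space ℓ₂^{n} (such H exists with d bounded by a universal constant, by Kašin's theorem), then K + 1 ≥ e^{-2} d^{-1} · ((2n − k)/log k)^{1/2}. -/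
/-- The Banach–Mazur distance from `E` to the Euclidean space of the same dimension:
`inf { ‖T‖ ‖T⁻¹‖ : T : E ≃ ℓ₂^{dim E} }`. -/
noncomputable def distToEuclidean (E : Type*) [SeminormedAddCommGroup E]
    [NormedSpace ℝ E] : ℝ :=
  sInf { c | ∃ T : E ≃L[ℝ] EuclideanSpace ℝ (Fin (Module.finrank ℝ E)),
    c = ‖(T : E →L[ℝ] EuclideanSpace ℝ (Fin (Module.finrank ℝ E)))‖ *
        ‖(T.symm : EuclideanSpace ℝ (Fin (Module.finrank ℝ E)) →L[ℝ] E)‖ }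

open Module

/-- Auxiliary: finrank of `ℓ∞^m`. -/
lemma pelczynski_aux_finrank (m : ℕ) : finrank ℝ (PiLp ⊤ fun _ : Fin m => ℝ) = m := by
  have := LinearEquiv.finrank_eq (WithLp.linearEquiv ⊤ ℝ (∀ _ : Fin m, ℝ))
  rw [this]; simp

/-- Auxiliary: Hahn–Banach extension of an operator into `ℓ∞^k`, coordinatewise. -/
lemma pelczynski_aux_extension {m k : ℕ} (H : Submodule ℝ (PiLp ⊤ fun _ : Fin m => ℝ))
    (u : H →L[ℝ] PiLp ⊤ fun _ : Fin k => ℝ) (hu : ‖u‖ ≤ 1) :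
    ∃ v : (PiLp ⊤ fun _ : Fin m => ℝ) →L[ℝ] (PiLp ⊤ fun _ : Fin k => ℝ),
      (∀ h : H, v h = u h) ∧ ∀ x, ‖v x‖ ≤ ‖x‖ := by
  have hcoord : ∀ (w : PiLp ⊤ fun _ : Fin k => ℝ) (i : Fin k), ‖w i‖ ≤ ‖w‖ := by
    intro w i
    have := norm_le_pi_norm (WithLp.equiv ⊤ (∀ _ : Fin k, ℝ) w) i
    simpa using this
  have hf : ∀ i : Fin k, ∃ g : (PiLp ⊤ fun _ : Fin m => ℝ) →L[ℝ] ℝ,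
      (∀ h : H, g h = u h i) ∧ ‖g‖ ≤ 1 := by
    intro i
    let f : H →L[ℝ] ℝ := LinearMap.mkContinuous
      { toFun := fun h => u h i
        map_add' := by intro a b; simp
        map_smul' := by intro c a; simp }
      1 (by
        intro h
        calc ‖u h i‖ ≤ ‖u h‖ := hcoord _ i
        _ ≤ ‖u‖ * ‖h‖ := u.le_opNorm h
        _ ≤ 1 * ‖h‖ := mul_le_mul_of_nonneg_right hu (norm_nonneg _))
    obtain ⟨g, hg, hgn⟩ := exists_extension_norm_eq H f
    refine ⟨g, fun h => hg h, ?_⟩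
    rw [hgn]
    exact LinearMap.mkContinuous_norm_le _ zero_le_one _
  choose g hg hgn using hf
  refine ⟨(PiLp.continuousLinearEquiv ⊤ ℝ (fun _ : Fin k => ℝ)).symm.toContinuousLinearMap.comp
      (ContinuousLinearMap.pi g), ?_, ?_⟩
  · intro h
    apply (WithLp.equiv ⊤ (∀ _ : Fin k, ℝ)).injective
    funext i
    simpa using hg i h
  · intro x
    have : ∀ i, ‖g i x‖ ≤ ‖x‖ := fun i =>
      (g i).le_opNorm x |>.trans (by nlinarith [hgn i, norm_nonneg x, norm_nonneg (g i)])
    calc ‖_‖ = ‖fun i => g i x‖ := by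
          exact PiLp.norm_toLp _
    _ ≤ ‖x‖ := pi_norm_le_iff_of_nonneg (norm_nonneg x) |>.2 this

/-- Auxiliary: if `E` admits a linear map to a Euclidean space which is an isomorphism onto its
image with bounds `a`, `b`, then the Banach–Mazur distance of `E` to Euclidean space is `≤ a b`. -/
lemma pelczynski_aux_dist_le {E : Type*} [NormedAddCommGroup E] [NormedSpace ℝ E]
    [FiniteDimensional ℝ E] {N : ℕ} (S : E →ₗ[ℝ] EuclideanSpace ℝ (Fin N)) (a b : ℝ)
    (ha0 : 0 ≤ a) (hb0 : 0 ≤ b)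
    (ha : ∀ x, ‖S x‖ ≤ a * ‖x‖) (hb : ∀ x, ‖x‖ ≤ b * ‖S x‖) :
    distToEuclidean E ≤ a * b := by
  have inj : Function.Injective S := by
    rw [← LinearMap.ker_eq_bot, LinearMap.ker_eq_bot']
    intro x hx
    have := hb x
    rw [hx] at this
    simp only [norm_zero, mul_zero] at this
    exact norm_le_zero_iff.mp this
  set F := LinearMap.range S with hF
  set e : E ≃ₗ[ℝ] F := LinearEquiv.ofInjective S inj with he
  have hrank : finrank ℝ F = finrank ℝ E := e.finrank_eq.symm
  let iso : F ≃ₗᵢ[ℝ] EuclideanSpace ℝ (Fin (finrank ℝ E)) :=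
    (stdOrthonormalBasis ℝ F).repr.trans
      (LinearIsometryEquiv.piLpCongrLeft 2 ℝ ℝ (finCongr hrank))
  let T' : E ≃L[ℝ] EuclideanSpace ℝ (Fin (finrank ℝ E)) :=
    (e.trans iso.toLinearEquiv).toContinuousLinearEquiv
  have hT'x : ∀ x : E, ‖T' x‖ = ‖S x‖ := by
    intro x
    have h1 : T' x = iso (e x) := rfl
    rw [h1, iso.norm_map]
    have h2 : ((e x : F) : EuclideanSpace ℝ (Fin N)) = S x := rfl
    rw [← h2]
    rfl
  have hTn : ‖(T' : E →L[ℝ] EuclideanSpace ℝ (Fin (finrank ℝ E)))‖ ≤ a := by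
    apply ContinuousLinearMap.opNorm_le_bound _ ha0
    intro x
    rw [ContinuousLinearEquiv.coe_coe, hT'x]
    exact ha x
  have hTsn : ‖(T'.symm : EuclideanSpace ℝ (Fin (finrank ℝ E)) →L[ℝ] E)‖ ≤ b := by
    apply ContinuousLinearMap.opNorm_le_bound _ hb0
    intro y
    rw [ContinuousLinearEquiv.coe_coe]
    calc ‖T'.symm y‖ ≤ b * ‖S (T'.symm y)‖ := hb _
    _ = b * ‖T' (T'.symm y)‖ := by rw [hT'x]
    _ = b * ‖y‖ := by rw [T'.apply_symm_apply]
  have hmem : ‖(T' : E →L[ℝ] EuclideanSpace ℝ (Fin (finrank ℝ E)))‖ *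
      ‖(T'.symm : EuclideanSpace ℝ (Fin (finrank ℝ E)) →L[ℝ] E)‖ ∈
      { c | ∃ T : E ≃L[ℝ] EuclideanSpace ℝ (Fin (Module.finrank ℝ E)),
        c = ‖(T : E →L[ℝ] EuclideanSpace ℝ (Fin (Module.finrank ℝ E)))‖ *
            ‖(T.symm : EuclideanSpace ℝ (Fin (Module.finrank ℝ E)) →L[ℝ] E)‖ } := ⟨T', rfl⟩
  have hbdd : BddBelow { c | ∃ T : E ≃L[ℝ] EuclideanSpace ℝ (Fin (Module.finrank ℝ E)),
        c = ‖(T : E →L[ℝ] EuclideanSpace ℝ (Fin (Module.finrank ℝ E)))‖ *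
            ‖(T.symm : EuclideanSpace ℝ (Fin (Module.finrank ℝ E)) →L[ℝ] E)‖ } := by
    refine ⟨0, fun c hc => ?_⟩
    obtain ⟨T, rfl⟩ := hc
    positivity
  calc distToEuclidean E ≤ ‖(T' : E →L[ℝ] EuclideanSpace ℝ (Fin (finrank ℝ E)))‖ *
      ‖(T'.symm : EuclideanSpace ℝ (Fin (finrank ℝ E)) →L[ℝ] E)‖ := csInf_le hbdd hmem
  _ ≤ a * b := mul_le_mul hTn hTsn (norm_nonneg _) ha0

/-- Proposition 3.2 (answering Pełczyński's question): let `H` be an `n`-dimensional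
subspace of `G = ℓ∞^{2n}` which is `K`-isomorphic to a subspace of `ℓ∞^k`, and let
`d` be the Banach–Mazur distance of `G/H` to Euclidean space.  Assuming the [BDGJN]
lower bound for high-dimensional subspaces of `ℓ∞^{2n}`, we get
`K + 1 ≥ e⁻² d⁻¹ ((2n − k)/log k)^{1/2}`. -/
theorem pelczynski_negative_answer (n k : ℕ) (hn : 2 ≤ n) (hk : 2 ≤ k) (K d : ℝ)
    (H : Submodule ℝ (PiLp ⊤ fun _ : Fin (2 * n) => ℝ))
    (hdimH : Module.finrank ℝ H = n)
    (hemb : ∃ u : H →L[ℝ] (PiLp ⊤ fun _ : Fin k => ℝ),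
      ‖u‖ ≤ 1 ∧ ∀ x : H, ‖x‖ ≤ K * ‖u x‖)
    (hd : distToEuclidean ((PiLp ⊤ fun _ : Fin (2 * n) => ℝ) ⧸ H) = d) (hd0 : 0 < d)
    (hBDGJN : ∀ E : Submodule ℝ (PiLp ⊤ fun _ : Fin (2 * n) => ℝ),
      ((2 * n : ℕ) : ℝ) - (k : ℝ) ≤ (Module.finrank ℝ E : ℝ) →
      Real.exp (-2) * Real.sqrt ((((2 * n : ℕ) : ℝ) - (k : ℝ)) / Real.log k) ≤
        distToEuclidean E) :
    Real.exp (-2) * d⁻¹ * Real.sqrt ((((2 * n : ℕ) : ℝ) - (k : ℝ)) / Real.log k) ≤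
      K + 1 := by
  obtain ⟨u, hu1, huK⟩ := hemb
  -- K is positive
  have hHnt : Nontrivial H := by
    apply Module.nontrivial_of_finrank_pos (R := ℝ)
    rw [hdimH]; omega
  obtain ⟨x0, hx0⟩ := exists_ne (0 : H)
  have hK : 0 < K := by
    have h1 : 0 < ‖x0‖ := norm_pos_iff.mpr hx0
    have h2 := huK x0
    nlinarith [norm_nonneg (u x0)]
  have hK1 : (0 : ℝ) < K + 1 := by linarith
  -- extend u to the whole space
  obtain ⟨v, hv, hvn⟩ := pelczynski_aux_extension H u hu1
  set E := LinearMap.ker (v : (PiLp ⊤ fun _ : Fin (2 * n) => ℝ) →ₗ[ℝ] PiLp ⊤ fun _ : Fin k => ℝ) with hE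
  -- dimension bound for E
  have hEdim : ((2 * n : ℕ) : ℝ) - (k : ℝ) ≤ (finrank ℝ E : ℝ) := by
    set vl := (v : (PiLp ⊤ fun _ : Fin (2 * n) => ℝ) →ₗ[ℝ] PiLp ⊤ fun _ : Fin k => ℝ) with hvl
    have h1 := LinearMap.finrank_range_add_finrank_ker vl
    rw [pelczynski_aux_finrank (2 * n)] at h1
    have h2 : finrank ℝ (LinearMap.range vl) ≤ finrank ℝ (PiLp ⊤ fun _ : Fin k => ℝ) :=
      Submodule.finrank_le _
    rw [pelczynski_aux_finrank k] at h2
    have hkk : finrank ℝ (LinearMap.ker vl) = finrank ℝ E := rfl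
    have h3 : (2 * n : ℕ) ≤ finrank ℝ E + k := by omega
    have h4 := Nat.cast_le (α := ℝ) |>.mpr h3
    push_cast at h4 ⊢
    linarith
  have hlow := hBDGJN E hEdim
  -- the key estimate: for x in E, ‖x‖ ≤ (K+1) ‖mk x‖
  have hkey : ∀ x : E, ‖(x : PiLp ⊤ fun _ : Fin (2 * n) => ℝ)‖ ≤
      (K + 1) * ‖(Submodule.Quotient.mk (p := H) (x : PiLp ⊤ fun _ : Fin (2 * n) => ℝ))‖ := by
    intro x
    refine le_of_forall_pos_le_add ?_
    intro ε hε
    obtain ⟨m, hm, hmn⟩ := Submodule.Quotient.norm_mk_lt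
      (Submodule.Quotient.mk (p := H) (x : PiLp ⊤ fun _ : Fin (2 * n) => ℝ))
      (show (0 : ℝ) < ε / (K + 1) by positivity)
    have hmem : (x : PiLp ⊤ fun _ : Fin (2 * n) => ℝ) - m ∈ H := by
      have := (Submodule.Quotient.eq H).mp hm
      simpa using H.neg_mem this
    set h : H := ⟨(x : PiLp ⊤ fun _ : Fin (2 * n) => ℝ) - m, hmem⟩ with hh
    have hvx : v (x : PiLp ⊤ fun _ : Fin (2 * n) => ℝ) = 0 := x.2
    have hvh : u h = -(v m) := by
      have h1 : v ((x : PiLp ⊤ fun _ : Fin (2 * n) => ℝ) - m) = u h := hv h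
      rw [map_sub, hvx, zero_sub] at h1
      exact h1.symm
    have hhn : ‖h‖ ≤ K * ‖m‖ := by
      calc ‖h‖ ≤ K * ‖u h‖ := huK h
      _ = K * ‖v m‖ := by rw [hvh, norm_neg]
      _ ≤ K * ‖m‖ := mul_le_mul_of_nonneg_left (hvn m) hK.le
    have hxm : ‖(x : PiLp ⊤ fun _ : Fin (2 * n) => ℝ)‖ ≤ (K + 1) * ‖m‖ := by
      have hcoe : ‖(h : PiLp ⊤ fun _ : Fin (2 * n) => ℝ)‖ = ‖h‖ := rfl
      calc ‖(x : PiLp ⊤ fun _ : Fin (2 * n) => ℝ)‖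
          = ‖((x : PiLp ⊤ fun _ : Fin (2 * n) => ℝ) - m) + m‖ := by congr 1; abel
      _ ≤ ‖(x : PiLp ⊤ fun _ : Fin (2 * n) => ℝ) - m‖ + ‖m‖ := norm_add_le _ _
      _ = ‖h‖ + ‖m‖ := by rw [← hcoe]
      _ ≤ K * ‖m‖ + ‖m‖ := by linarith
      _ = (K + 1) * ‖m‖ := by ring
    have hfin : (K + 1) * (‖(Submodule.Quotient.mk (p := H)
          (x : PiLp ⊤ fun _ : Fin (2 * n) => ℝ))‖ + ε / (K + 1))
        = (K + 1) * ‖(Submodule.Quotient.mk (p := H)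
          (x : PiLp ⊤ fun _ : Fin (2 * n) => ℝ))‖ + ε := by
      rw [mul_add, mul_div_cancel₀ _ hK1.ne']
    calc ‖(x : PiLp ⊤ fun _ : Fin (2 * n) => ℝ)‖ ≤ (K + 1) * ‖m‖ := hxm
    _ ≤ (K + 1) * (‖(Submodule.Quotient.mk (p := H)
          (x : PiLp ⊤ fun _ : Fin (2 * n) => ℝ))‖ + ε / (K + 1)) :=
        mul_le_mul_of_nonneg_left hmn.le hK1.le
    _ = (K + 1) * ‖(Submodule.Quotient.mk (p := H)
          (x : PiLp ⊤ fun _ : Fin (2 * n) => ℝ))‖ + ε := hfin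
  -- closedness of H, hence the quotient is a normed (Hausdorff) space
  haveI : IsClosed (H : Set (PiLp ⊤ fun _ : Fin (2 * n) => ℝ)) :=
    Submodule.closed_of_finiteDimensional H
  -- for every T in the distance set of G/H, distToEuclidean E ≤ (K+1) ‖T‖‖T⁻¹‖
  have hup : ∀ T : ((PiLp ⊤ fun _ : Fin (2 * n) => ℝ) ⧸ H) ≃L[ℝ]
      EuclideanSpace ℝ (Fin (finrank ℝ ((PiLp ⊤ fun _ : Fin (2 * n) => ℝ) ⧸ H))),
      distToEuclidean E ≤ (K + 1) *
        (‖(T : ((PiLp ⊤ fun _ : Fin (2 * n) => ℝ) ⧸ H) →L[ℝ] EuclideanSpace ℝ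
            (Fin (finrank ℝ ((PiLp ⊤ fun _ : Fin (2 * n) => ℝ) ⧸ H))))‖ *
         ‖(T.symm : EuclideanSpace ℝ (Fin (finrank ℝ ((PiLp ⊤ fun _ : Fin (2 * n) => ℝ) ⧸ H)))
            →L[ℝ] ((PiLp ⊤ fun _ : Fin (2 * n) => ℝ) ⧸ H))‖) := by
    intro T
    have haT : (0 : ℝ) ≤ ‖(T : ((PiLp ⊤ fun _ : Fin (2 * n) => ℝ) ⧸ H) →L[ℝ] EuclideanSpace ℝ
        (Fin (finrank ℝ ((PiLp ⊤ fun _ : Fin (2 * n) => ℝ) ⧸ H))))‖ := ContinuousLinearMap.opNorm_nonneg _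
    have hbT : (0 : ℝ) ≤ (K + 1) *
        ‖(T.symm : EuclideanSpace ℝ (Fin (finrank ℝ ((PiLp ⊤ fun _ : Fin (2 * n) => ℝ) ⧸ H)))
          →L[ℝ] ((PiLp ⊤ fun _ : Fin (2 * n) => ℝ) ⧸ H))‖ :=
      mul_nonneg hK1.le (ContinuousLinearMap.opNorm_nonneg _)
    set S : E →ₗ[ℝ] EuclideanSpace ℝ (Fin (finrank ℝ ((PiLp ⊤ fun _ : Fin (2 * n) => ℝ) ⧸ H))) :=
      T.toLinearEquiv.toLinearMap ∘ₗ (H.mkQ ∘ₗ E.subtype) with hS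
    have hSx : ∀ x : E, S x = T (Submodule.Quotient.mk (p := H)
        (x : PiLp ⊤ fun _ : Fin (2 * n) => ℝ)) := fun x => rfl
    have hTle : ∀ z : (PiLp ⊤ fun _ : Fin (2 * n) => ℝ) ⧸ H, ‖T z‖ ≤
        ‖(T : ((PiLp ⊤ fun _ : Fin (2 * n) => ℝ) ⧸ H) →L[ℝ] EuclideanSpace ℝ
          (Fin (finrank ℝ ((PiLp ⊤ fun _ : Fin (2 * n) => ℝ) ⧸ H))))‖ * ‖z‖ := fun z =>
      (T : ((PiLp ⊤ fun _ : Fin (2 * n) => ℝ) ⧸ H) →L[ℝ] EuclideanSpace ℝ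
          (Fin (finrank ℝ ((PiLp ⊤ fun _ : Fin (2 * n) => ℝ) ⧸ H)))).le_opNorm z
    have hTsle : ∀ w : EuclideanSpace ℝ (Fin (finrank ℝ ((PiLp ⊤ fun _ : Fin (2 * n) => ℝ) ⧸ H))),
        ‖T.symm w‖ ≤
        ‖(T.symm : EuclideanSpace ℝ (Fin (finrank ℝ ((PiLp ⊤ fun _ : Fin (2 * n) => ℝ) ⧸ H)))
          →L[ℝ] ((PiLp ⊤ fun _ : Fin (2 * n) => ℝ) ⧸ H))‖ * ‖w‖ := fun w =>
      (T.symm : EuclideanSpace ℝ (Fin (finrank ℝ ((PiLp ⊤ fun _ : Fin (2 * n) => ℝ) ⧸ H)))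
          →L[ℝ] ((PiLp ⊤ fun _ : Fin (2 * n) => ℝ) ⧸ H)).le_opNorm w
    have ha : ∀ x : E, ‖S x‖ ≤
        ‖(T : ((PiLp ⊤ fun _ : Fin (2 * n) => ℝ) ⧸ H) →L[ℝ] EuclideanSpace ℝ
          (Fin (finrank ℝ ((PiLp ⊤ fun _ : Fin (2 * n) => ℝ) ⧸ H))))‖ * ‖x‖ := by
      intro x
      rw [hSx]
      refine (hTle _).trans ?_
      have hmk : ‖(Submodule.Quotient.mk (p := H) (x : PiLp ⊤ fun _ : Fin (2 * n) => ℝ))‖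
          ≤ ‖x‖ := Submodule.Quotient.norm_mk_le H (x : PiLp ⊤ fun _ : Fin (2 * n) => ℝ)
      exact mul_le_mul_of_nonneg_left hmk haT
    have hb : ∀ x : E, ‖x‖ ≤ ((K + 1) *
        ‖(T.symm : EuclideanSpace ℝ (Fin (finrank ℝ ((PiLp ⊤ fun _ : Fin (2 * n) => ℝ) ⧸ H)))
          →L[ℝ] ((PiLp ⊤ fun _ : Fin (2 * n) => ℝ) ⧸ H))‖) * ‖S x‖ := by
      intro x
      have h1 : ‖x‖ ≤ (K + 1) * ‖(Submodule.Quotient.mk (p := H)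
          (x : PiLp ⊤ fun _ : Fin (2 * n) => ℝ))‖ := hkey x
      have h2 : ‖(Submodule.Quotient.mk (p := H) (x : PiLp ⊤ fun _ : Fin (2 * n) => ℝ))‖
          ≤ ‖(T.symm : EuclideanSpace ℝ (Fin (finrank ℝ ((PiLp ⊤ fun _ : Fin (2 * n) => ℝ) ⧸ H)))
            →L[ℝ] ((PiLp ⊤ fun _ : Fin (2 * n) => ℝ) ⧸ H))‖ * ‖S x‖ := by
        have h3 : (Submodule.Quotient.mk (p := H) (x : PiLp ⊤ fun _ : Fin (2 * n) => ℝ))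
            = T.symm (S x) := by rw [hSx, T.symm_apply_apply]
        rw [h3]
        exact hTsle _
      calc ‖x‖ ≤ (K + 1) * ‖(Submodule.Quotient.mk (p := H)
          (x : PiLp ⊤ fun _ : Fin (2 * n) => ℝ))‖ := h1
      _ ≤ (K + 1) *
          (‖(T.symm : EuclideanSpace ℝ (Fin (finrank ℝ ((PiLp ⊤ fun _ : Fin (2 * n) => ℝ) ⧸ H)))
            →L[ℝ] ((PiLp ⊤ fun _ : Fin (2 * n) => ℝ) ⧸ H))‖ * ‖S x‖) :=
          mul_le_mul_of_nonneg_left h2 hK1.le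
      _ = ((K + 1) *
          ‖(T.symm : EuclideanSpace ℝ (Fin (finrank ℝ ((PiLp ⊤ fun _ : Fin (2 * n) => ℝ) ⧸ H)))
            →L[ℝ] ((PiLp ⊤ fun _ : Fin (2 * n) => ℝ) ⧸ H))‖) * ‖S x‖ := by ring
    have hmain := pelczynski_aux_dist_le S _ _ haT hbT ha hb
    refine hmain.trans (le_of_eq ?_)
    ring
  -- nonemptiness of the distance set for G/H
  have hfr : finrank ℝ ((PiLp ⊤ fun _ : Fin (2 * n) => ℝ) ⧸ H)
      = finrank ℝ (EuclideanSpace ℝ (Fin (finrank ℝ ((PiLp ⊤ fun _ : Fin (2 * n) => ℝ) ⧸ H)))) := by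
    rw [finrank_euclideanSpace_fin]
  obtain ⟨L⟩ := FiniteDimensional.nonempty_linearEquiv_of_finrank_eq hfr
  have T₀ : ((PiLp ⊤ fun _ : Fin (2 * n) => ℝ) ⧸ H) ≃L[ℝ]
      EuclideanSpace ℝ (Fin (finrank ℝ ((PiLp ⊤ fun _ : Fin (2 * n) => ℝ) ⧸ H))) :=
    L.toContinuousLinearEquiv
  -- conclude: distToEuclidean E ≤ (K+1) d
  have hdE : distToEuclidean E ≤ (K + 1) * d := by
    have hlb : distToEuclidean E / (K + 1) ≤
        distToEuclidean ((PiLp ⊤ fun _ : Fin (2 * n) => ℝ) ⧸ H) := by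
      unfold distToEuclidean
      refine le_csInf ⟨‖(T₀ : ((PiLp ⊤ fun _ : Fin (2 * n) => ℝ) ⧸ H) →L[ℝ] EuclideanSpace ℝ
          (Fin (finrank ℝ ((PiLp ⊤ fun _ : Fin (2 * n) => ℝ) ⧸ H))))‖ *
        ‖(T₀.symm : EuclideanSpace ℝ (Fin (finrank ℝ ((PiLp ⊤ fun _ : Fin (2 * n) => ℝ) ⧸ H)))
          →L[ℝ] ((PiLp ⊤ fun _ : Fin (2 * n) => ℝ) ⧸ H))‖, T₀, rfl⟩ ?_
      rintro c ⟨T, rfl⟩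
      rw [div_le_iff₀ hK1]
      exact le_trans (hup T) (le_of_eq (by ring))
    rw [hd] at hlb
    calc distToEuclidean E = distToEuclidean E / (K + 1) * (K + 1) := by
          field_simp
    _ ≤ d * (K + 1) := mul_le_mul_of_nonneg_right hlb hK1.le
    _ = (K + 1) * d := by ring
  -- final arithmetic
  have hfinal : Real.exp (-2) * Real.sqrt ((((2 * n : ℕ) : ℝ) - (k : ℝ)) / Real.log k)
      ≤ (K + 1) * d := le_trans hlow hdE
  have h2 : (Real.exp (-2) * Real.sqrt ((((2 * n : ℕ) : ℝ) - (k : ℝ)) / Real.log k)) / d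
      ≤ K + 1 := (div_le_iff₀ hd0).mpr hfinal
  calc Real.exp (-2) * d⁻¹ * Real.sqrt ((((2 * n : ℕ) : ℝ) - (k : ℝ)) / Real.log k)
      = (Real.exp (-2) * Real.sqrt ((((2 * n : ℕ) : ℝ) - (k : ℝ)) / Real.log k)) / d := by
        ring
  _ ≤ K + 1 := h2
end
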